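/- arXiv:2203.09814 — 2 statements merged into one kernel-verified Lean document; each statement's English description precedes it below -/
import Mathlib

section
/- Let q ∈ [1, 2) and let σ be a Borel probability measure on ℝ² whose support is contained in the closed unit disk. Suppose there is a constant A > 0 such that for every smooth compactly supported function φ : ℝ² → ℝ one has ∫ φ dσ ≤ A (‖φ‖_{L^q(ℝ²)} + ‖∇φ‖_{L^q(ℝ²)}). Then there is a constant C, depending only on q and A, such that σ(B(x₀, ε)) ≤ C ε^{2/q − 1} for every x₀ ∈ ℝ² and every ε > 0; that is, σ is d-Frostman with d = 2/q − 1. -/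
/-!
Test the duality hypothesis against a smooth bump equal to `1` on `B(x₀, ε)`, supported in
`B(x₀, 2ε)`, with gradient of size `O(1/ε)`. Its `L^q` norm is `O(ε^{2/q})` and that of its
gradient `O(ε^{2/q - 1})`, which dominates for `ε ≤ 1`; for `ε > 1` the trivial bound
`σ(B(x₀, ε)) ≤ 1` suffices.
-/

open MeasureTheory Metric

section Gradient
variable {𝕜 F : Type*} [RCLike 𝕜] [NormedAddCommGroup F] [InnerProductSpace 𝕜 F] [CompleteSpace F]
  {f : F → 𝕜}

theorem norm_gradient (x : F) : ‖gradient f x‖ = ‖fderiv 𝕜 f x‖ := by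
  rw [← toDual_gradient, LinearIsometryEquiv.norm_map]

theorem support_gradient_subset : Function.support (gradient f) ⊆ tsupport f := fun x hx ↦
  support_fderiv_subset 𝕜 <| by
    rw [Function.mem_support, ← norm_ne_zero_iff, ← norm_gradient, norm_ne_zero_iff]; exact hx

end Gradient

theorem toReal_eLpNorm_le_of_support_subset {α F : Type*} [MeasurableSpace α]
    [NormedAddCommGroup F] {μ : Measure α} {p : ENNReal} {f : α → F} {s : Set α} {C : ℝ}
    (hfs : Function.support f ⊆ s) (hs : μ s ≠ ⊤) (hC : 0 ≤ C) (hf : ∀ x, ‖f x‖ ≤ C) :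
    (eLpNorm f p μ).toReal ≤ μ.real s ^ p.toReal⁻¹ * C := by
  have h := eLpNorm_le_of_ae_bound (p := p) (μ := μ.restrict s) (ae_of_all _ hf)
  rw [eLpNorm_restrict_eq_of_support_subset hfs, Measure.restrict_apply_univ] at h
  have := ENNReal.toReal_mono (by finiteness) h
  simpa [ENNReal.toReal_mul, ENNReal.toReal_rpow, hC, measureReal_def] using this

namespace ContDiffBump
variable {E : Type*} [NormedAddCommGroup E] [NormedSpace ℝ E] [HasContDiffBump E]

def dilate (g : ContDiffBump (0 : E)) (c : E) {r : ℝ} (hr : 0 < r) : ContDiffBump c :=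
  ⟨r * g.rIn, r * g.rOut, mul_pos hr g.rIn_pos, mul_lt_mul_of_pos_left g.rIn_lt_rOut hr⟩

variable (g : ContDiffBump (0 : E)) (c : E) {r : ℝ} (hr : 0 < r)

theorem dilate_apply (x : E) : g.dilate c hr x = g (r⁻¹ • (x - c)) := by
  simp only [ContDiffBump.apply, dilate, mul_div_mul_left _ _ hr.ne', mul_inv, mul_smul, sub_zero,
    smul_comm r⁻¹]

theorem norm_fderiv_dilate_le {K : ℝ} (hK : ∀ y, ‖fderiv ℝ g y‖ ≤ K) (x : E) :
    ‖fderiv ℝ (g.dilate c hr) x‖ ≤ K / r := by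
  have hcomp : (g.dilate c hr : E → ℝ) = g ∘ fun x ↦ r⁻¹ • (x - c) := funext (g.dilate_apply c hr)
  have hlin : HasFDerivAt (fun x : E ↦ r⁻¹ • (x - c)) (r⁻¹ • ContinuousLinearMap.id ℝ E) x :=
    ((hasFDerivAt_id x).sub_const c).const_smul r⁻¹
  rw [hcomp, (((g.contDiff (n := 1)).differentiable one_ne_zero _).hasFDerivAt.comp x hlin).fderiv]
  calc _ ≤ ‖fderiv ℝ g (r⁻¹ • (x - c))‖ * ‖r⁻¹ • ContinuousLinearMap.id ℝ E‖ :=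
        ContinuousLinearMap.opNorm_comp_le _ _
    _ ≤ K * r⁻¹ := by
        gcongr
        · exact (norm_nonneg _).trans (hK 0)
        · exact hK _
        · rw [norm_smul, Real.norm_of_nonneg (inv_nonneg.2 hr.le)]
          exact mul_le_of_le_one_right (inv_nonneg.2 hr.le) ContinuousLinearMap.norm_id_le
    _ = K / r := rfl

theorem exists_norm_fderiv_le [FiniteDimensional ℝ E] {c : E} (f : ContDiffBump c) :
    ∃ K, ∀ x, ‖fderiv ℝ f x‖ ≤ K :=
  ((f.contDiff (n := 1)).continuous_fderiv one_ne_zero).bounded_above_of_compact_support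
    (f.hasCompactSupport.fderiv ℝ)

section Dilation
open Module
variable {E : Type*} [NormedAddCommGroup E] [InnerProductSpace ℝ E] [FiniteDimensional ℝ E]
  [MeasurableSpace E] [BorelSpace E] (μ : Measure E) [μ.IsAddHaarMeasure]

theorem exists_eLpNorm_dilate_add_le (g : ContDiffBump (0 : E)) (p : ENNReal) :
    ∃ B, ∀ (c : E) {r : ℝ} (hr : 0 < r), r ≤ 1 →
      (eLpNorm (g.dilate c hr) p μ).toReal + (eLpNorm (gradient (g.dilate c hr)) p μ).toReal
        ≤ B * r ^ (finrank ℝ E / p.toReal - 1) := by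
  obtain ⟨K, hK⟩ := g.exists_norm_fderiv_le
  have hK0 : 0 ≤ K := (norm_nonneg _).trans (hK 0)
  set M := μ.real (closedBall 0 g.rOut) ^ p.toReal⁻¹
  refine ⟨M * (1 + K), fun c r hr hr1 ↦ ?_⟩
  have htsupp : tsupport (g.dilate c hr) = closedBall c (r * g.rOut) := (g.dilate c hr).tsupport_eq
  have hvol :
      μ.real (closedBall c (r * g.rOut)) ^ p.toReal⁻¹ = r ^ (finrank ℝ E / p.toReal) * M := by
    rw [measureReal_def, μ.addHaar_closedBall_mul c hr.le g.rOut_pos.le, ENNReal.toReal_mul,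
      ENNReal.toReal_ofReal (by positivity), ← measureReal_def,
      Real.mul_rpow (by positivity) measureReal_nonneg, ← Real.rpow_natCast, ← Real.rpow_mul hr.le,
      div_eq_mul_inv]
  have hfun := toReal_eLpNorm_le_of_support_subset (μ := μ) (p := p) (subset_tsupport _)
    (htsupp ▸ measure_closedBall_lt_top.ne) zero_le_one fun x ↦ by
      rw [Real.norm_of_nonneg (g.dilate c hr).nonneg]; exact (g.dilate c hr).le_one
  have hgrad := toReal_eLpNorm_le_of_support_subset (μ := μ) (p := p) support_gradient_subset
    (htsupp ▸ measure_closedBall_lt_top.ne) (div_nonneg hK0 hr.le) fun x ↦ by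
      rw [norm_gradient]; exact g.norm_fderiv_dilate_le c hr hK x
  rw [htsupp, hvol] at hfun hgrad
  have hM : 0 ≤ M := by positivity
  have hrpow : r ^ (finrank ℝ E / p.toReal) ≤ r ^ (finrank ℝ E / p.toReal - 1) :=
    Real.rpow_le_rpow_of_exponent_ge hr hr1 (by linarith)
  have hdiv : r ^ (finrank ℝ E / p.toReal) / r = r ^ (finrank ℝ E / p.toReal - 1) := by
    rw [Real.rpow_sub hr, Real.rpow_one]
  calc _ ≤ r ^ (finrank ℝ E / p.toReal) * M * 1 + r ^ (finrank ℝ E / p.toReal) * M * (K / r) :=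
        add_le_add hfun hgrad
    _ = M * r ^ (finrank ℝ E / p.toReal) + M * K * (r ^ (finrank ℝ E / p.toReal) / r) := by ring
    _ ≤ M * r ^ (finrank ℝ E / p.toReal - 1) + M * K * r ^ (finrank ℝ E / p.toReal - 1) := by
        rw [hdiv]; gcongr
    _ = M * (1 + K) * r ^ (finrank ℝ E / p.toReal - 1) := by ring

end Dilation

end ContDiffBump

theorem exists_measure_ball_le_rpow_of_le_one {X : Type*} [PseudoMetricSpace X]
    [MeasurableSpace X] (σ : Measure X) [IsProbabilityMeasure σ] {d C : ℝ} (hd : 0 ≤ d)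
    (h : ∀ x ε, 0 < ε → ε ≤ 1 → σ.real (ball x ε) ≤ C * ε ^ d) :
    ∃ C' : ℝ, 0 < C' ∧ ∀ x ε, 0 < ε → σ (ball x ε) ≤ ENNReal.ofReal (C' * ε ^ d) := by
  refine ⟨max 1 C, one_pos.trans_le (le_max_left _ _), fun x ε hε ↦ ?_⟩
  rcases le_or_gt ε 1 with hε1 | hε1
  · rw [← ofReal_measureReal]
    exact ENNReal.ofReal_le_ofReal <| (h x ε hε hε1).trans <| by gcongr; exact le_max_right _ _
  · calc σ (ball x ε) ≤ 1 := prob_le_one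
      _ ≤ ENNReal.ofReal (max 1 C * ε ^ d) := by
        rw [← ENNReal.ofReal_one]
        exact ENNReal.ofReal_le_ofReal <|
          one_le_mul_of_one_le_of_one_le (le_max_left _ _) (Real.one_le_rpow hε1.le hd)

theorem frostman_of_sobolev_duality_general
    (q : ℝ) (hq : q ∈ Set.Ico (1 : ℝ) 2)
    (σ : Measure (EuclideanSpace ℝ (Fin 2))) [IsProbabilityMeasure σ]
    (A : ℝ)
    (hdual : ∀ φ : EuclideanSpace ℝ (Fin 2) → ℝ,
      ContDiff ℝ (⊤ : ℕ∞) φ → HasCompactSupport φ →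
      ∫ x, φ x ∂σ ≤
        A * ((eLpNorm φ (ENNReal.ofReal q) volume).toReal
          + (eLpNorm (fun x => gradient φ x) (ENNReal.ofReal q) volume).toReal)) :
    ∃ C : ℝ, 0 < C ∧
      ∀ (x₀ : EuclideanSpace ℝ (Fin 2)) (ε : ℝ), 0 < ε →
        σ (Metric.ball x₀ ε) ≤ ENNReal.ofReal (C * ε ^ (2 / q - 1)) := by
  obtain ⟨hq1, hq2⟩ := hq
  have hq0 : 0 < q := by linarith
  have hd : 0 ≤ 2 / q - 1 := by rw [sub_nonneg, le_div_iff₀ hq0]; linarith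
  let g : ContDiffBump (0 : EuclideanSpace ℝ (Fin 2)) := ⟨1, 2, one_pos, one_lt_two⟩
  obtain ⟨B, hB⟩ := g.exists_eLpNorm_dilate_add_le volume (ENNReal.ofReal q)
  simp only [finrank_euclideanSpace_fin, ENNReal.toReal_ofReal hq0.le, Nat.cast_ofNat] at hB
  refine exists_measure_ball_le_rpow_of_le_one σ (C := |A| * B) hd fun x₀ ε hε hε1 ↦ ?_
  let f := g.dilate x₀ hε
  calc σ.real (ball x₀ ε) ≤ σ.real (closedBall x₀ ε) := measureReal_mono ball_subset_closedBall
    _ ≤ ∫ x, f x ∂σ := by simpa [f, g, ContDiffBump.dilate] using f.measure_closedBall_le_integral σ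
    _ ≤ A * ((eLpNorm f (ENNReal.ofReal q) volume).toReal
          + (eLpNorm (gradient f) (ENNReal.ofReal q) volume).toReal) :=
        hdual f f.contDiff f.hasCompactSupport
    _ ≤ |A| * ((eLpNorm f (ENNReal.ofReal q) volume).toReal
          + (eLpNorm (gradient f) (ENNReal.ofReal q) volume).toReal) := by
        gcongr; exact le_abs_self A
    _ ≤ |A| * B * ε ^ (2 / q - 1) := by
        rw [mul_assoc]; gcongr; exact hB x₀ hε hε1

theorem frostman_of_sobolev_duality
    (q : ℝ) (hq : q ∈ Set.Ico (1 : ℝ) 2)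
    (σ : Measure (EuclideanSpace ℝ (Fin 2))) [IsProbabilityMeasure σ]
    (hsupp : σ (Metric.closedBall (0 : EuclideanSpace ℝ (Fin 2)) 1)ᶜ = 0)
    (A : ℝ) (hA : 0 < A)
    (hdual : ∀ φ : EuclideanSpace ℝ (Fin 2) → ℝ,
      ContDiff ℝ (⊤ : ℕ∞) φ → HasCompactSupport φ →
      ∫ x, φ x ∂σ ≤
        A * ((eLpNorm φ (ENNReal.ofReal q) volume).toReal
          + (eLpNorm (fun x => gradient φ x) (ENNReal.ofReal q) volume).toReal)) :
    ∃ C : ℝ, 0 < C ∧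
      ∀ (x₀ : EuclideanSpace ℝ (Fin 2)) (ε : ℝ), 0 < ε →
        σ (Metric.ball x₀ ε) ≤ ENNReal.ofReal (C * ε ^ (2 / q - 1)) :=
  frostman_of_sobolev_duality_general q hq σ A hdual
end

section
/- For every C₀ > 0 there is a constant C > 0, depending only on C₀, such that the following holds. Let r ≥ 1, ρ > 0, let Ω ⊂ ℝ³ be open (with coordinates (t, x, y) and e_t := (1,0,0)), let u : Ω → ℝ be C² and let b, H : Ω → ℝ be continuous, and assume that at every point of Ω: u·Δu − |∇u|² + 2 r u² (1 − u − b) = H; 0 ≤ u ≤ 1 + C₀/r; 0 ≤ b ≤ C₀/r; |H| ≤ C₀(1 + √r); |∂_t u| ≤ C₀; |∇ ∂_t u| ≤ C₀ √r; |∇u| ≤ C₀ √r; and the Hessian of u has operator norm at most C₀ r. Let Σ ⊂ Ω be a closed disk of radius ρ contained in an affine plane whose unit normal N satisfies |N − e_t| ≤ C₀ ρ. If q is a local minimum of the restriction of u to Σ lying in the relative interior of Σ, then u(q)² (1 − u(q)) ≤ C (r^{−1/2} + ρ²); consequently, setting η := r^{−1/2} + ρ², either u(q) ≤ C η^{1/2}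 or 1 − u(q) ≤ C η. -/
open MeasureTheory Metric Filter

noncomputable section

/-- The t-direction in ℝ³ (coordinates (t, x, y)). -/
def eT : EuclideanSpace ℝ (Fin 3) := EuclideanSpace.single 0 1

def e3 (i : Fin 3) : EuclideanSpace ℝ (Fin 3) := EuclideanSpace.single i 1

def lap3 (u : EuclideanSpace ℝ (Fin 3) → ℝ) (p : EuclideanSpace ℝ (Fin 3)) : ℝ :=
  ∑ i : Fin 3, fderiv ℝ (fun q => fderiv ℝ u q (e3 i)) p (e3 i)

/-- The closed disk of radius ρ centered at p₀ inside the affine plane through p₀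
with unit normal N. -/
def planarDisk (p₀ N : EuclideanSpace ℝ (Fin 3)) (ρ : ℝ) :
    Set (EuclideanSpace ℝ (Fin 3)) :=
  {p | ‖p - p₀‖ ≤ ρ ∧ inner ℝ (p - p₀) N = (0 : ℝ)}

/-!
At an interior minimum `q` of `u` on the disk, the first- and second-order conditions along the
lines of the disk say that `∇u(q)` is normal to the disk and that the Hessian of `u` is
nonnegative on the tangent plane. Hence `|∇u(q)| = |∂_N u(q)| ≤ |∂_t u| + |∇u| |N - e_t|`, and,
computing the Laplacian in an orthonormal basis containing `N`, `Δu(q) ≥ D²u(q)(N, N)`, which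
differs from `∂_t² u(q)` by `O(√r ρ + r ρ²)` because `|N - e_t| ≤ C₀ ρ`. Inserting these bounds
into `2 r u² (1 - u) = H + |∇u|² - u Δu + 2 r u² b` and dividing by `r` gives
`u² (1 - u) ≲ r^{-1/2} + ρ²`; the dichotomy follows by comparing `u` with `1/2`.
-/

open Topology InnerProductSpace Laplacian

theorem IsLocalMin.deriv_deriv_nonneg {f : ℝ → ℝ} {a : ℝ} (hmin : IsLocalMin f a)
    (hc : ContinuousAt f a) : 0 ≤ deriv (deriv f) a := by
  by_contra! hneg
  have hmax := isLocalMax_of_deriv_deriv_neg hneg hmin.deriv_eq_zero hc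
  have hconst : f =ᶠ[𝓝 a] fun _ => f a :=
    (hmin.and hmax).mono fun x hx => le_antisymm hx.2 hx.1
  have hderiv : deriv f =ᶠ[𝓝 a] fun _ => 0 :=
    hconst.eventuallyEq_nhds.mono fun x hx => by simp [hx.deriv_eq]
  simp [hderiv.deriv_eq] at hneg

section NormedSpace

variable {E : Type*} [NormedAddCommGroup E] [NormedSpace ℝ E] {u : E → ℝ} {q v : E}

theorem ContDiffAt.differentiableAt_fderiv (hu : ContDiffAt ℝ 2 u q) :
    DifferentiableAt ℝ (fderiv ℝ u) q :=
  (hu.fderiv_right (m := 1) (by norm_num)).differentiableAt (by norm_num)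

theorem hasDerivAt_line (q v : E) (t : ℝ) : HasDerivAt (fun s : ℝ => q + s • v) v t := by
  simpa using ((hasDerivAt_id t).smul_const v).const_add q

theorem hasDerivAt_comp_line {t : ℝ} (hu : DifferentiableAt ℝ u (q + t • v)) :
    HasDerivAt (fun s : ℝ => u (q + s • v)) (fderiv ℝ u (q + t • v) v) t :=
  hu.hasFDerivAt.comp_hasDerivAt t (hasDerivAt_line q v t)

theorem fderiv_apply_eq_zero_of_isLocalMin_line (hu : DifferentiableAt ℝ u q)
    (hmin : IsLocalMin (fun t : ℝ => u (q + t • v)) 0) : fderiv ℝ u q v = 0 := by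
  simpa using hmin.hasDerivAt_eq_zero (hasDerivAt_comp_line (t := 0) (by simpa using hu))

theorem fderiv_fderiv_apply_self_nonneg_of_isLocalMin_line (hu : ContDiffAt ℝ 2 u q)
    (hmin : IsLocalMin (fun t : ℝ => u (q + t • v)) 0) :
    0 ≤ fderiv ℝ (fderiv ℝ u) q v v := by
  have hline : Tendsto (fun t : ℝ => q + t • v) (𝓝 0) (𝓝 q) := by
    simpa using (hasDerivAt_line q v 0).continuousAt.tendsto
  have hderiv : deriv (fun t : ℝ => u (q + t • v)) =ᶠ[𝓝 0]
      fun t => fderiv ℝ u (q + t • v) v :=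
    hline.eventually ((hu.eventually (by simp)).mono fun x hx =>
      hx.differentiableAt (by norm_num)) |>.mono fun t ht => (hasDerivAt_comp_line ht).deriv
  have h2 : HasDerivAt (fun t : ℝ => fderiv ℝ u (q + t • v) v)
      (fderiv ℝ (fderiv ℝ u) q v v) 0 := by
    have hfd' : HasFDerivAt (fun p => fderiv ℝ u p v) ((fderiv ℝ (fderiv ℝ u) q).flip v)
        (q + (0 : ℝ) • v) := by
      simpa using hu.differentiableAt_fderiv.hasFDerivAt.clm_apply (hasFDerivAt_const v q)
    exact hfd'.comp_hasDerivAt (0 : ℝ) (hasDerivAt_line q v 0)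
  have hc : ContinuousAt (fun t : ℝ => u (q + t • v)) 0 :=
    (hasDerivAt_comp_line (t := 0) (by simpa using hu.differentiableAt (by norm_num))).continuousAt
  simpa [hderiv.deriv_eq, h2.deriv] using hmin.deriv_deriv_nonneg hc

theorem fderiv_fderiv_apply (hu : DifferentiableAt ℝ (fderiv ℝ u) q) (v w : E) :
    fderiv ℝ (fun p => fderiv ℝ u p w) q v = fderiv ℝ (fderiv ℝ u) q v w := by
  rw [fderiv_clm_apply hu (differentiableAt_const w)]; simp

theorem ContinuousLinearMap.apply_self_sub_le_apply_add_self (B : E →L[ℝ] E →L[ℝ] ℝ) {e d : E}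
    (hB : B e d = B d e) :
    B e e - (2 * |B d e| + ‖B‖ * ‖d‖ ^ 2) ≤ B (e + d) (e + d) := by
  have hdd : |B d d| ≤ ‖B‖ * ‖d‖ ^ 2 := by
    simpa [sq, mul_assoc] using B.le_opNorm₂ d d
  have hexp : B (e + d) (e + d) = B e e + B e d + B d e + B d d := by
    simp only [map_add, add_apply]; ring
  rw [hexp, hB]
  linarith [neg_abs_le (B d e), neg_abs_le (B d d)]

end NormedSpace

section InnerProductSpace

variable {F : Type*} [NormedAddCommGroup F] [InnerProductSpace ℝ F]

theorem norm_eq_abs_inner_of_forall_inner_eq_zero {G N : F} (hN : ‖N‖ = 1)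
    (h : ∀ v, ⟪v, N⟫_ℝ = 0 → ⟪G, v⟫_ℝ = 0) : ‖G‖ = |⟪G, N⟫_ℝ| := by
  set c := ⟪G, N⟫_ℝ
  have hperp : ⟪G - c • N, N⟫_ℝ = 0 := by
    rw [inner_sub_left, real_inner_smul_left, real_inner_self_eq_norm_sq, hN]; ring
  have hsq : ‖G‖ ^ 2 = c ^ 2 := by
    have hG : G = c • N + (G - c • N) := by abel
    rw [← real_inner_self_eq_norm_sq]
    nth_rewrite 2 [hG]
    rw [inner_add_right, h _ hperp, real_inner_smul_right]; ring
  rw [← Real.sqrt_sq (norm_nonneg G), hsq, Real.sqrt_sq_eq_abs]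

theorem norm_le_abs_inner_add_of_forall_inner_eq_zero {G N : F} (hN : ‖N‖ = 1)
    (h : ∀ v, ⟪v, N⟫_ℝ = 0 → ⟪G, v⟫_ℝ = 0) (e : F) :
    ‖G‖ ≤ |⟪G, e⟫_ℝ| + ‖G‖ * ‖N - e‖ :=
  calc ‖G‖ = |⟪G, e + (N - e)⟫_ℝ| := by
        rw [add_sub_cancel]; exact norm_eq_abs_inner_of_forall_inner_eq_zero hN h
    _ ≤ |⟪G, e⟫_ℝ| + |⟪G, N - e⟫_ℝ| := by rw [inner_add_right]; exact abs_add_le _ _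
    _ ≤ |⟪G, e⟫_ℝ| + ‖G‖ * ‖N - e‖ := by gcongr; exact abs_real_inner_le_norm _ _

theorem fderiv_fderiv_apply_le_laplacian [FiniteDimensional ℝ F] {u : F → ℝ} {q N : F}
    (hN : ‖N‖ = 1) (h : ∀ v, ⟪v, N⟫_ℝ = 0 → 0 ≤ fderiv ℝ (fderiv ℝ u) q v v) :
    fderiv ℝ (fderiv ℝ u) q N N ≤ Δ u q := by
  classical
  have hNon : Orthonormal ℝ ((↑) : ({N} : Set F) → F) := by simpa using hN
  obtain ⟨s, b, hNs, hb⟩ := hNon.exists_orthonormalBasis_extension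
  have hNs : N ∈ s := hNs rfl
  have hon : ∀ v ∈ s, ∀ w ∈ s, ⟪v, w⟫_ℝ = if v = w then 1 else 0 :=
    orthonormal_subtype_iff_ite.mp (hb ▸ b.orthonormal)
  rw [laplacian_eq_iteratedFDeriv_orthonormalBasis u b]
  simp only [iteratedFDeriv_two_apply, hb, Matrix.cons_val_zero, Matrix.cons_val_one]
  rw [Finset.sum_coe_sort s (fun v => fderiv ℝ (fderiv ℝ u) q v v), ← Finset.add_sum_erase s _ hNs]
  refine le_add_of_nonneg_right (Finset.sum_nonneg fun v hv => h v ?_)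
  rw [hon v (Finset.mem_of_mem_erase hv) N hNs, if_neg (Finset.ne_of_mem_erase hv)]

theorem neg_le_laplacian_of_isLocalMin_line [FiniteDimensional ℝ F] {u : F → ℝ} {q N e : F}
    (hu : ContDiffAt ℝ 2 u q) (hN : ‖N‖ = 1) (he : ‖e‖ = 1)
    (hline : ∀ v, ⟪v, N⟫_ℝ = 0 → IsLocalMin (fun t : ℝ => u (q + t • v)) 0) :
    -(‖gradient (fun p => fderiv ℝ u p e) q‖ * (1 + 2 * ‖N - e‖)
      + ‖fderiv ℝ (fderiv ℝ u) q‖ * ‖N - e‖ ^ 2) ≤ Δ u q := by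
  set B := fderiv ℝ (fderiv ℝ u) q
  have hBe : ∀ v, |B v e| ≤ ‖gradient (fun p => fderiv ℝ u p e) q‖ * ‖v‖ := fun v => by
    rw [← fderiv_fderiv_apply hu.differentiableAt_fderiv, ← inner_gradient_left]
    exact abs_real_inner_le_norm _ _
  have hsymm : B e (N - e) = B (N - e) e := hu.isSymmSndFDerivAt (by simp) e (N - e)
  calc _ ≤ B e e - (2 * |B (N - e) e| + ‖B‖ * ‖N - e‖ ^ 2) := by
        have := hBe e
        rw [he, mul_one] at this
        linarith [neg_abs_le (B e e), hBe (N - e)]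
    _ ≤ B (e + (N - e)) (e + (N - e)) := B.apply_self_sub_le_apply_add_self hsymm
    _ = B N N := by rw [add_sub_cancel]
    _ ≤ Δ u q := fderiv_fderiv_apply_le_laplacian hN fun v hv =>
        fderiv_fderiv_apply_self_nonneg_of_isLocalMin_line hu (hline v hv)

end InnerProductSpace

theorem lap3_eq_laplacian {u : EuclideanSpace ℝ (Fin 3) → ℝ} {p : EuclideanSpace ℝ (Fin 3)}
    (hu : DifferentiableAt ℝ (fderiv ℝ u) p) : lap3 u p = Δ u p := by
  simp [laplacian_eq_iteratedFDeriv_orthonormalBasis u (EuclideanSpace.basisFun (Fin 3) ℝ),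
    lap3, e3, iteratedFDeriv_two_apply, fderiv_fderiv_apply hu]

theorem IsLocalMinOn.isLocalMin_line_of_planarDisk {u : EuclideanSpace ℝ (Fin 3) → ℝ}
    {p₀ N q v : EuclideanSpace ℝ (Fin 3)} {ρ : ℝ} (hmin : IsLocalMinOn u (planarDisk p₀ N ρ) q)
    (hq : q ∈ planarDisk p₀ N ρ) (hqρ : ‖q - p₀‖ < ρ) (hv : ⟪v, N⟫_ℝ = 0) :
    IsLocalMin (fun t : ℝ => u (q + t • v)) 0 := by
  have hcont : ContinuousAt (fun t : ℝ => q + t • v) 0 := (hasDerivAt_line q v 0).continuousAt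
  have hlim : Tendsto (fun t : ℝ => q + t • v) (𝓝 0) (𝓝[planarDisk p₀ N ρ] q) := by
    refine tendsto_nhdsWithin_iff.mpr ⟨by simpa using hcont.tendsto, ?_⟩
    have hnear : ∀ᶠ t : ℝ in 𝓝 0, ‖q + t • v - p₀‖ < ρ :=
      (continuous_norm.continuousAt.comp (hcont.sub continuousAt_const)).eventually_lt
        continuousAt_const (by simpa using hqρ)
    filter_upwards [hnear] with t ht
    refine ⟨ht.le, ?_⟩
    rw [add_sub_right_comm, inner_add_left, real_inner_smul_left, hq.2, hv]; ring
  have hmin' : IsMinFilter u (𝓝[planarDisk p₀ N ρ] q) (q + (0 : ℝ) • v) := by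
    rw [zero_smul, add_zero]; exact hmin
  exact hmin'.comp_tendsto (g := fun t : ℝ => q + t • v) hlim

theorem sq_mul_one_sub_le_of_flowBox_bounds {C₀ s ρ U b G H L : ℝ} (hC₀ : 0 ≤ C₀) (hs : 1 ≤ s)
    (hρ : 0 ≤ ρ) (hU0 : 0 ≤ U) (hU1 : U ≤ 1 + C₀ / s ^ 2) (hb : b ≤ C₀ / s ^ 2)
    (hH : |H| ≤ C₀ * (1 + s)) (hG0 : 0 ≤ G) (hG : G ≤ C₀ + C₀ * s * (C₀ * ρ))
    (hL : -(C₀ * s * (1 + 2 * (C₀ * ρ)) + C₀ * s ^ 2 * (C₀ * ρ) ^ 2) ≤ L)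
    (heq : U * L - G ^ 2 + 2 * s ^ 2 * U ^ 2 * (1 - U - b) = H) :
    U ^ 2 * (1 - U) ≤ 4 * (1 + C₀) ^ 4 * (s⁻¹ + ρ ^ 2) := by
  set M := 1 + C₀
  have hM : 1 ≤ M := by linarith
  have hCM : ∀ {j k : ℕ}, j ≤ k → C₀ ^ j ≤ M ^ k := fun hjk =>
    (pow_le_pow_left₀ hC₀ (by linarith) _).trans (pow_le_pow_right₀ hM hjk)
  have hs2 : 1 ≤ s ^ 2 := one_le_pow₀ hs
  have hU : U ≤ M := by linarith [div_le_self hC₀ hs2]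
  have hsb : s ^ 2 * b ≤ C₀ := by
    rw [le_div_iff₀ (by positivity)] at hb; linarith
  set P := s + ρ ^ 2 * s ^ 2
  have hsP : s ≤ P := le_add_of_nonneg_right (by positivity)
  have hρs : 2 * (ρ * s) ≤ P := by nlinarith [sq_nonneg (ρ * s - 1)]
  have hHb : H ≤ 2 * M ^ 4 * P := by
    have := hCM (j := 1) (k := 4) (by norm_num)
    nlinarith [le_abs_self H]
  have hGb : G ^ 2 ≤ 2 * M ^ 4 * P := by
    have h2 : G ^ 2 ≤ 2 * C₀ ^ 2 + 2 * C₀ ^ 4 * (ρ ^ 2 * s ^ 2) := by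
      nlinarith [sq_nonneg (C₀ - C₀ * s * (C₀ * ρ))]
    nlinarith [hCM (j := 2) (k := 4) (by norm_num), hCM (j := 4) (k := 4) le_rfl]
  have hLb : -(U * L) ≤ 2 * M ^ 4 * P := by
    have hL3 : -L ≤ 2 * M ^ 3 * P := by
      have h1 := mul_le_mul_of_nonneg_right (hCM (j := 1) (k := 3) (by norm_num))
        (by positivity : 0 ≤ s)
      have h2 := mul_le_mul_of_nonneg_right (hCM (j := 2) (k := 3) (by norm_num))
        (by positivity : 0 ≤ 2 * (ρ * s))
      have h3 := mul_le_mul_of_nonneg_right (hCM (j := 3) (k := 3) le_rfl)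
        (by positivity : 0 ≤ ρ ^ 2 * s ^ 2)
      have h4 := mul_le_mul_of_nonneg_left hρs (by positivity : 0 ≤ M ^ 3)
      linarith
    have h1 := mul_le_mul_of_nonneg_left hL3 hU0
    have h2 := mul_le_mul_of_nonneg_right hU (by positivity : 0 ≤ 2 * M ^ 3 * P)
    linarith
  have hbb : s ^ 2 * U ^ 2 * b ≤ M ^ 4 * P := by
    have h1 := mul_le_mul_of_nonneg_left hsb (sq_nonneg U)
    have h2 := mul_le_mul (pow_le_pow_left₀ hU0 hU 2) (hCM (j := 1) (k := 2) (by norm_num))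
      (by positivity) (by positivity)
    have h3 := mul_le_mul_of_nonneg_left (hs.trans hsP) (by positivity : 0 ≤ M ^ 4)
    linarith
  have hP : 2 * s ^ 2 * (4 * M ^ 4 * (s⁻¹ + ρ ^ 2)) = 8 * M ^ 4 * P := by
    field_simp; ring
  refine le_of_mul_le_mul_left (a := 2 * s ^ 2) ?_ (by positivity)
  rw [hP]
  linear_combination heq + hHb + hGb + hLb + 2 * hbb

theorem le_mul_sqrt_or_one_sub_le_of_sq_mul_one_sub_le {A U η : ℝ} (hA : 0 ≤ A) (hU : 0 ≤ U)
    (hη : 0 ≤ η) (h : U ^ 2 * (1 - U) ≤ A * η) :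
    U ≤ (4 * A + 1) * Real.sqrt η ∨ 1 - U ≤ (4 * A + 1) * η := by
  rcases lt_or_ge U (1 / 2) with hsmall | hlarge
  · left
    have hU2 : U ^ 2 ≤ ((4 * A + 1) * Real.sqrt η) ^ 2 := by
      rw [mul_pow, Real.sq_sqrt hη]
      nlinarith [mul_nonneg hA hη]
    exact le_of_sq_le_sq hU2 (by positivity)
  · right
    rcases le_or_gt (1 - U) 0 with hU1 | hU1
    · nlinarith [mul_nonneg hA hη]
    · nlinarith [mul_nonneg hA hη, mul_le_mul_of_nonneg_right (by nlinarith : 1 / 4 ≤ U ^ 2) hU1.le]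

theorem maximum_principle_flowBox (C₀ : ℝ) (hC₀ : 0 < C₀) :
    ∃ C : ℝ, 0 < C ∧
    ∀ (r ρ : ℝ), 1 ≤ r → 0 < ρ →
    ∀ (Ω : Set (EuclideanSpace ℝ (Fin 3))), IsOpen Ω →
    ∀ (u b H : EuclideanSpace ℝ (Fin 3) → ℝ),
      ContDiffOn ℝ 2 u Ω → ContinuousOn b Ω → ContinuousOn H Ω →
    (∀ p ∈ Ω,
      u p * lap3 u p - ‖gradient u p‖ ^ 2
        + 2 * r * (u p) ^ 2 * (1 - u p - b p) = H p ∧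
      0 ≤ u p ∧ u p ≤ 1 + C₀ / r ∧
      0 ≤ b p ∧ b p ≤ C₀ / r ∧
      |H p| ≤ C₀ * (1 + Real.sqrt r) ∧
      |fderiv ℝ u p eT| ≤ C₀ ∧
      ‖gradient (fun q => fderiv ℝ u q eT) p‖ ≤ C₀ * Real.sqrt r ∧
      ‖gradient u p‖ ≤ C₀ * Real.sqrt r ∧
      ‖fderiv ℝ (fderiv ℝ u) p‖ ≤ C₀ * r) →
    ∀ (p₀ N : EuclideanSpace ℝ (Fin 3)), ‖N‖ = 1 → ‖N - eT‖ ≤ C₀ * ρ →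
      planarDisk p₀ N ρ ⊆ Ω →
    ∀ q ∈ planarDisk p₀ N ρ, ‖q - p₀‖ < ρ →
      IsLocalMinOn u (planarDisk p₀ N ρ) q →
      (u q) ^ 2 * (1 - u q) ≤ C * ((Real.sqrt r)⁻¹ + ρ ^ 2) ∧
      (u q ≤ C * Real.sqrt ((Real.sqrt r)⁻¹ + ρ ^ 2) ∨
        1 - u q ≤ C * ((Real.sqrt r)⁻¹ + ρ ^ 2)) := by
  refine ⟨4 * (4 * (1 + C₀) ^ 4) + 1, by positivity, ?_⟩
  intro r ρ hr hρ Ω hΩ u b H hu _ _ hpt p₀ N hN hNeT hsub q hq hqρ hmin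
  obtain ⟨heq, hu0, hu1, -, hb1, hH, hut, hgut, hgu, hhess⟩ := hpt q (hsub hq)
  have hu2 : ContDiffAt ℝ 2 u q := hu.contDiffAt (hΩ.mem_nhds (hsub hq))
  have hline : ∀ v, ⟪v, N⟫_ℝ = 0 → IsLocalMin (fun t : ℝ => u (q + t • v)) 0 :=
    fun v hv => hmin.isLocalMin_line_of_planarDisk hq hqρ hv
  have hgrad : ‖gradient u q‖ ≤ C₀ + C₀ * √r * (C₀ * ρ) :=
    calc ‖gradient u q‖ ≤ |⟪gradient u q, eT⟫_ℝ| + ‖gradient u q‖ * ‖N - eT‖ :=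
          norm_le_abs_inner_add_of_forall_inner_eq_zero hN (fun v hv => by
            rw [inner_gradient_left]
            exact fderiv_apply_eq_zero_of_isLocalMin_line
              (hu2.differentiableAt (by norm_num)) (hline v hv)) eT
      _ ≤ C₀ + C₀ * √r * (C₀ * ρ) := by rw [inner_gradient_left]; gcongr
  have hlap : -(C₀ * √r * (1 + 2 * (C₀ * ρ)) + C₀ * √r ^ 2 * (C₀ * ρ) ^ 2) ≤ lap3 u q := by
    rw [lap3_eq_laplacian hu2.differentiableAt_fderiv, Real.sq_sqrt (by linarith)]
    calc _ ≤ -(‖gradient (fun p => fderiv ℝ u p eT) q‖ * (1 + 2 * ‖N - eT‖)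
          + ‖fderiv ℝ (fderiv ℝ u) q‖ * ‖N - eT‖ ^ 2) := by gcongr
      _ ≤ Δ u q := neg_le_laplacian_of_isLocalMin_line hu2 hN (by simp [eT]) hline
  rw [← Real.sq_sqrt (by linarith : 0 ≤ r)] at heq hu1 hb1
  have hmain := sq_mul_one_sub_le_of_flowBox_bounds hC₀.le (Real.one_le_sqrt.mpr hr) hρ.le
    hu0 hu1 hb1 hH (norm_nonneg _) hgrad hlap heq
  have hA : 0 ≤ 4 * (1 + C₀) ^ 4 := by positivity
  exact ⟨hmain.trans (by gcongr; linarith),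
    le_mul_sqrt_or_one_sub_le_of_sq_mul_one_sub_le hA hu0 (by positivity) hmain⟩
end
end
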